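/- arXiv:1404.1106 — 2 statements merged into one kernel-verified Lean document; each statement's English description precedes it below -/
import Mathlib

section
/- For all points ζ₁, ζ₂, ζ₃, ζ₄ on the unit sphere S^{d-1} ⊂ ℝ^d satisfying ζ₁ + ζ₂ + ζ₃ + ζ₄ = 0, one has |ζ₁ + ζ₂|·|ζ₃ + ζ₄| + |ζ₁ + ζ₃|·|ζ₂ + ζ₄| + |ζ₁ + ζ₄|·|ζ₂ + ζ₃| = 4. -/
/-! Writing `ζ₃ + ζ₄ = -(ζ₁ + ζ₂)` and so on, each product is a square `‖ζ₁ + ζⱼ‖²`, and for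
four vectors summing to zero the three squares `‖x + y‖² + ‖x + z‖² + ‖x + w‖²` add up to
`‖x‖² + ‖y‖² + ‖z‖² + ‖w‖²`, since the cross terms sum to `2⟪x, y + z + w⟫ = -2‖x‖²`. -/

section InnerProductSpace

variable {E : Type*} [NormedAddCommGroup E] [InnerProductSpace ℝ E]

theorem norm_add_sq_add_norm_add_sq_add_norm_add_sq_of_add_eq_zero {x y z w : E}
    (h : x + y + z + w = 0) :
    ‖x + y‖ ^ 2 + ‖x + z‖ ^ 2 + ‖x + w‖ ^ 2 = ‖x‖ ^ 2 + ‖y‖ ^ 2 + ‖z‖ ^ 2 + ‖w‖ ^ 2 := by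
  obtain rfl : w = -(x + y + z) := eq_neg_of_add_eq_zero_right h
  have hxw : x + -(x + y + z) = -(y + z) := by abel
  simp only [hxw, norm_neg, norm_add_sq_real, inner_add_left]
  ring

end InnerProductSpace

theorem norm_add_eq_norm_add_of_add_add_eq_zero {E : Type*} [SeminormedAddCommGroup E]
    {a b c d : E} (h : a + b + (c + d) = 0) : ‖c + d‖ = ‖a + b‖ := by
  rw [eq_neg_of_add_eq_zero_right h, norm_neg]

theorem sphere_four_point_identity (d : ℕ)
    (ζ₁ ζ₂ ζ₃ ζ₄ : EuclideanSpace ℝ (Fin d))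
    (h₁ : ‖ζ₁‖ = 1) (h₂ : ‖ζ₂‖ = 1) (h₃ : ‖ζ₃‖ = 1) (h₄ : ‖ζ₄‖ = 1)
    (hsum : ζ₁ + ζ₂ + ζ₃ + ζ₄ = 0) :
    ‖ζ₁ + ζ₂‖ * ‖ζ₃ + ζ₄‖ + ‖ζ₁ + ζ₃‖ * ‖ζ₂ + ζ₄‖ + ‖ζ₁ + ζ₄‖ * ‖ζ₂ + ζ₃‖ = 4 := by
  have h₃₄ : ‖ζ₃ + ζ₄‖ = ‖ζ₁ + ζ₂‖ :=
    norm_add_eq_norm_add_of_add_add_eq_zero (by rw [← hsum]; abel)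
  have h₂₄ : ‖ζ₂ + ζ₄‖ = ‖ζ₁ + ζ₃‖ :=
    norm_add_eq_norm_add_of_add_add_eq_zero (by rw [← hsum]; abel)
  have h₂₃ : ‖ζ₂ + ζ₃‖ = ‖ζ₁ + ζ₄‖ :=
    norm_add_eq_norm_add_of_add_add_eq_zero (by rw [← hsum]; abel)
  rw [h₃₄, h₂₄, h₂₃, ← sq, ← sq, ← sq,
    norm_add_sq_add_norm_add_sq_add_norm_add_sq_of_add_eq_zero hsum, h₁, h₂, h₃, h₄]
  norm_num
end

section
/- For every integer k ≥ 2, with τ_j := ∫_{−1}^{1} C_j^1(t) dt, the Funk–Hecke coefficient Λ_k(φ₄) := ω₂ ∫_{−1}^{1} (C_k^1(t)/C_k^1(1)) · φ₄(t) · (1−t²)^{1/2} dt with φ₄(t) = 2(1−t)^{1/2}(1+t)^{1/2} satisfies 2(k+1)/ω₂ · Λ_k(φ₄) = 2τ_k − τ_{k−2} − τ_{k+2}. Consequently Λ_{2j+1}(φ₄) = 0 for all j ≥ 0 and Λ_{2j}(φ₄) = (ω₂/(2(2j+1)))·(4/(2j+1) − 2/(2j−1) − 2/(2j+3)) < 0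 for all j ≥ 1, while Λ₀(φ₄) = 32π/3 > 0. -/
/-- `C` is the family of Gegenbauer (ultraspherical) polynomials with parameter `α`,
characterized by the generating function `(1 - 2rt + r²)^(-α) = Σ_k C_k^α(t) r^k`
for `t ∈ [-1, 1]` and `|r|` small. -/
def IsGegenbauer (α : ℝ) (C : ℕ → Polynomial ℝ) : Prop :=
  ∀ t ∈ Set.Icc (-1:ℝ) 1, ∀ r : ℝ, |r| < 1/2 →
    HasSum (fun k : ℕ => (C k).eval t * r ^ k) ((1 - 2*r*t + r^2) ^ (-α))

/-- The weight `φ₄(t) = 2 (1-t)^{1/2} (1+t)^{1/2}`. -/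
noncomputable def phi4 (t : ℝ) : ℝ := 2 * Real.sqrt (1 - t) * Real.sqrt (1 + t)

/-- The moments `τ_j = ∫_{-1}^1 C_j^1(t) dt`. -/
noncomputable def tauMoment (C : ℕ → Polynomial ℝ) (j : ℕ) : ℝ :=
  ∫ t in (-1:ℝ)..1, (C j).eval t

/-- The Funk–Hecke coefficient `Λ_k(φ₄)` in dimension `d = 4`, with `ω₂ = 4π`. -/
noncomputable def Lambda4 (C : ℕ → Polynomial ℝ) (k : ℕ) : ℝ :=
  (4 * Real.pi) *
    ∫ t in (-1:ℝ)..1, ((C k).eval t / (C k).eval 1) * phi4 t * Real.sqrt (1 - t^2)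

/-!
Comparing coefficients in `(1 - 2rt + r²) ∑ C_k(t) r^k = 1` shows that `C_k(t)` obeys the
three-term recurrence of the Chebyshev polynomials `U_k`, so `C_k = U_k`. Since
`φ₄(t) √(1 - t²) = 2 (1 - t²)`, the coefficient `Λ_k` is a multiple of `∫ U_k(t) (1 - t²) dt`, which
the identity `(4t² - 2) U_k = U_{k+2} + U_{k-2}` turns into the moments `τ_j`. These come from
`T_{n+1}' = (n + 1) U_n`: `(n + 1) τ_n = T_{n+1}(1) - T_{n+1}(-1) = 1 + (-1)^n`.
-/

open Polynomial Polynomial.Chebyshev Filter Topology FormalMultilinearSeries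

section PowerSeries

variable {𝕜 : Type*} [NontriviallyNormedField 𝕜]

theorem eq_of_eventually_hasSum_mul_pow
    {a b : ℕ → 𝕜} {f : 𝕜 → 𝕜}
    (ha : ∀ᶠ r in 𝓝 0, HasSum (fun k => a k * r ^ k) (f r))
    (hb : ∀ᶠ r in 𝓝 0, HasSum (fun k => b k * r ^ k) (f r)) : a = b := by
  have hfps (c : ℕ → 𝕜) (hc : ∀ᶠ r in 𝓝 0, HasSum (fun k => c k * r ^ k) (f r)) :
      HasFPowerSeriesAt f (ofScalars 𝕜 c) 0 :=
    hasFPowerSeriesAt_iff.2 (by simpa [coeff_ofScalars, mul_comm] using hc)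
  exact ofScalars_series_injective 𝕜 (E := 𝕜)
    ((hfps a ha).eq_formalMultilinearSeries (hfps b hb))

/-- The coefficients of the power series `(1 - 2 t r + r²) ∑ c_k r^k`. -/
def quadMulCoeff (t : 𝕜) (c : ℕ → 𝕜) : ℕ → 𝕜
  | 0 => c 0
  | 1 => c 1 - 2 * t * c 0
  | k + 2 => c (k + 2) - 2 * t * c (k + 1) + c k

theorem hasSum_quadMulCoeff {t r s : 𝕜} {c : ℕ → 𝕜} (h : HasSum (fun k => c k * r ^ k) s) :
    HasSum (fun k => quadMulCoeff t c k * r ^ k) ((1 - 2 * r * t + r ^ 2) * s) := by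
  have h₁ := (hasSum_nat_add_iff' 1).2 h
  have h₂ := (hasSum_nat_add_iff' 2).2 h
  refine (hasSum_nat_add_iff' 2).1 ?_
  convert (h₂.sub (h₁.mul_left (2 * t * r))).add (h.mul_left (r ^ 2)) using 1
  · funext k
    simp only [quadMulCoeff]
    ring
  · simp only [quadMulCoeff, Finset.sum_range_succ, Finset.range_one, Finset.sum_singleton,
      pow_zero, mul_one, pow_one]
    ring

theorem eq_eval_U_of_quadMulCoeff {t : 𝕜} {c : ℕ → 𝕜}
    (h : quadMulCoeff t c = fun k => if k = 0 then 1 else 0) : ∀ k : ℕ, c k = (U 𝕜 k).eval t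
  | 0 => by simpa [quadMulCoeff] using congrFun h 0
  | 1 => by
    have h₀ : c 0 = 1 := by simpa [quadMulCoeff] using congrFun h 0
    have h₁ : c 1 - 2 * t * c 0 = 0 := by simpa [quadMulCoeff] using congrFun h 1
    simp only [Nat.cast_one, U_one, eval_mul, eval_ofNat, eval_X]
    linear_combination h₁ + 2 * t * h₀
  | k + 2 => by
    have hk : c (k + 2) - 2 * t * c (k + 1) + c k = 0 := by
      simpa [quadMulCoeff] using congrFun h (k + 2)
    have ih₀ := eq_eval_U_of_quadMulCoeff h k
    have ih₁ := eq_eval_U_of_quadMulCoeff h (k + 1)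
    push_cast at ih₁ ⊢
    rw [U_add_two, eval_sub, eval_mul, eval_mul, eval_X, eval_ofNat, ← ih₀, ← ih₁]
    linear_combination hk

theorem eq_eval_U_of_eventually_hasSum {t : 𝕜} {c : ℕ → 𝕜}
    (h : ∀ᶠ r in 𝓝 0, HasSum (fun k => c k * r ^ k) (1 - 2 * r * t + r ^ 2)⁻¹) :
    ∀ k : ℕ, c k = (U 𝕜 k).eval t := by
  refine eq_eval_U_of_quadMulCoeff (eq_of_eventually_hasSum_mul_pow (f := fun _ => 1) ?_ ?_)
  · have hq : ∀ᶠ r in 𝓝 (0 : 𝕜), 1 - 2 * r * t + r ^ 2 ≠ 0 :=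
      (by fun_prop : Continuous fun r : 𝕜 => 1 - 2 * r * t + r ^ 2).continuousAt.eventually_ne
        (by simp)
    filter_upwards [h, hq] with r hr hqr
    simpa [hqr] using hasSum_quadMulCoeff (t := t) hr
  · filter_upwards with r
    convert hasSum_ite_eq 0 (1 : 𝕜) using 2 with k
    split_ifs <;> simp_all

end PowerSeries

theorem IsGegenbauer.eq_U {C : ℕ → ℝ[X]} (hC : IsGegenbauer 1 C) : C = fun k : ℕ => U ℝ k := by
  funext k
  refine eq_of_infinite_eval_eq _ _ ((Set.Icc_infinite (by norm_num : (-1 : ℝ) < 1)).mono ?_)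
  intro t ht
  refine eq_eval_U_of_eventually_hasSum (c := fun k => (C k).eval t) ?_ k
  filter_upwards [Metric.ball_mem_nhds (0 : ℝ) (by norm_num : (0 : ℝ) < 1 / 2)] with r hr
  simpa [Real.rpow_neg_one] using hC t ht r (by simpa using hr)

theorem mul_integral_eval_U (n : ℤ) :
    ((n : ℝ) + 1) * ∫ t in (-1 : ℝ)..1, (U ℝ n).eval t = 1 - ((n + 1).negOnePow : ℝ) := by
  have hT : derivative (T ℝ (n + 1)) = ((n + 1 : ℤ) : ℝ[X]) * U ℝ n := by
    simp [T_derivative_eq_U]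
  rw [← intervalIntegral.integral_const_mul]
  have := intervalIntegral.integral_deriv_eq_sub' (a := -1) (b := 1) (fun x => (T ℝ (n + 1)).eval x)
    (funext fun x => Polynomial.deriv _) (fun x _ => Polynomial.differentiableAt _)
    (Polynomial.continuousOn _)
  simp only [hT, eval_mul, eval_intCast, T_eval_one, T_eval_neg_one] at this
  push_cast at this
  simpa using this

theorem integral_eval_U_of_even {n : ℤ} (hn : Even n) :
    ∫ t in (-1 : ℝ)..1, (U ℝ n).eval t = 2 / (n + 1) := by
  have hn₁ : (n : ℝ) + 1 ≠ 0 := by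
    obtain ⟨m, rfl⟩ := hn
    exact_mod_cast (by omega : m + m + 1 ≠ 0)
  rw [eq_div_iff hn₁, mul_comm, mul_integral_eval_U, Int.negOnePow_succ, Int.negOnePow_even _ hn]
  norm_num

theorem integral_eval_U_of_odd {n : ℤ} (hn : Odd n) :
    ∫ t in (-1 : ℝ)..1, (U ℝ n).eval t = 0 := by
  rcases eq_or_ne n (-1) with rfl | hn₁
  · simp
  have h := mul_integral_eval_U n
  rw [Int.negOnePow_succ, Int.negOnePow_odd _ hn] at h
  have : (n : ℝ) + 1 ≠ 0 := by exact_mod_cast (by omega : n + 1 ≠ 0)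
  simpa [this] using h

theorem four_mul_X_sq_sub_two_mul_U {R : Type*} [CommRing R] (n : ℤ) :
    (4 * X ^ 2 - 2) * U R n = U R (n + 2) + U R (n - 2) := by
  have h := U_sub_one R (n - 1)
  rw [sub_sub, one_add_one_eq_two, sub_add_cancel] at h
  linear_combination -h - U_add_two R n - 2 * X * U_add_one R n

theorem integral_eval_U_mul_one_sub_sq (n : ℤ) :
    4 * ∫ t in (-1 : ℝ)..1, (U ℝ n).eval t * (1 - t ^ 2) =
      2 * (∫ t in (-1 : ℝ)..1, (U ℝ n).eval t) - (∫ t in (-1 : ℝ)..1, (U ℝ (n - 2)).eval t) -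
        ∫ t in (-1 : ℝ)..1, (U ℝ (n + 2)).eval t := by
  have hint (m : ℤ) : IntervalIntegrable (fun t => (U ℝ m).eval t) MeasureTheory.volume (-1) 1 :=
    (U ℝ m).continuous.intervalIntegrable _ _
  have hpt (t : ℝ) : 4 * ((U ℝ n).eval t * (1 - t ^ 2)) =
      2 * (U ℝ n).eval t - (U ℝ (n - 2)).eval t - (U ℝ (n + 2)).eval t := by
    have := congrArg (eval t) (four_mul_X_sq_sub_two_mul_U (R := ℝ) n)
    simp only [eval_mul, eval_sub, eval_add, eval_pow, eval_X, eval_ofNat] at this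
    linear_combination -this
  rw [← intervalIntegral.integral_const_mul, intervalIntegral.integral_congr fun t _ => hpt t,
    intervalIntegral.integral_sub (((hint n).const_mul 2).sub (hint _)) (hint _),
    intervalIntegral.integral_sub ((hint n).const_mul 2) (hint _),
    intervalIntegral.integral_const_mul]

theorem phi4_mul_sqrt_one_sub_sq {t : ℝ} (ht : t ∈ Set.Icc (-1 : ℝ) 1) :
    phi4 t * √(1 - t ^ 2) = 2 * (1 - t ^ 2) := by
  have h : √(1 - t) * √(1 + t) = √(1 - t ^ 2) := by
    rw [← Real.sqrt_mul (by linarith [ht.2])]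
    ring_nf
  rw [phi4, mul_assoc 2, h, mul_assoc, Real.mul_self_sqrt (by nlinarith [ht.1, ht.2])]

theorem Lambda4_eq_mul_integral (C : ℕ → ℝ[X]) (k : ℕ) :
    Lambda4 C k = 8 * Real.pi / (C k).eval 1 * ∫ t in (-1 : ℝ)..1, (C k).eval t * (1 - t ^ 2) := by
  rw [Lambda4, ← intervalIntegral.integral_const_mul, ← intervalIntegral.integral_const_mul]
  refine intervalIntegral.integral_congr fun t ht => ?_
  rw [Set.uIcc_of_le (by norm_num)] at ht
  simp only [mul_assoc, phi4_mul_sqrt_one_sub_sq ht]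
  ring

theorem Lambda4_U (k : ℕ) :
    Lambda4 (fun k : ℕ => U ℝ k) k = 2 * Real.pi / (k + 1) *
      (2 * (∫ t in (-1 : ℝ)..1, (U ℝ k).eval t) - (∫ t in (-1 : ℝ)..1, (U ℝ (k - 2)).eval t) -
        ∫ t in (-1 : ℝ)..1, (U ℝ (k + 2)).eval t) := by
  rw [Lambda4_eq_mul_integral, U_eval_one, ← integral_eval_U_mul_one_sub_sq]
  push_cast
  ring

theorem Lambda4_U_two_mul_add_one (j : ℕ) : Lambda4 (fun k : ℕ => U ℝ k) (2 * j + 1) = 0 := by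
  rw [Lambda4_U, integral_eval_U_of_odd ⟨j, by push_cast; ring⟩,
    integral_eval_U_of_odd ⟨j - 1, by push_cast; ring⟩,
    integral_eval_U_of_odd ⟨j + 1, by push_cast; ring⟩]
  ring

/-- Valid for `j = 0` too: `U` is indexed by `ℤ`, so `2j - 2 = -2` and `U_{-2} = -U_0`. -/
theorem Lambda4_U_two_mul (j : ℕ) :
    Lambda4 (fun k : ℕ => U ℝ k) (2 * j) = 4 * Real.pi / (2 * (2 * (j : ℝ) + 1)) *
      (4 / (2 * (j : ℝ) + 1) - 2 / (2 * (j : ℝ) - 1) - 2 / (2 * (j : ℝ) + 3)) := by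
  have hj : 2 * (j : ℝ) - 1 ≠ 0 := by
    intro h
    have : ((2 * j : ℕ) : ℝ) = 1 := by push_cast; linarith
    norm_cast at this
    omega
  rw [Lambda4_U, integral_eval_U_of_even ⟨j, by push_cast; ring⟩,
    integral_eval_U_of_even ⟨j - 1, by push_cast; ring⟩,
    integral_eval_U_of_even ⟨j + 1, by push_cast; ring⟩]
  push_cast
  rw [show 2 * (j : ℝ) - 2 + 1 = 2 * j - 1 by ring, show 2 * (j : ℝ) + 2 + 1 = 2 * j + 3 by ring]
  field_simp
  ring

theorem four_div_sub_two_div_sub_two_div_neg {x : ℝ} (hx : 1 / 2 < x) :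
    4 / (2 * x + 1) - 2 / (2 * x - 1) - 2 / (2 * x + 3) < 0 := by
  have h₁ : 0 < 2 * x - 1 := by linarith
  have key : 4 / (2 * x + 1) - 2 / (2 * x - 1) - 2 / (2 * x + 3) =
      -16 / ((2 * x + 1) * (2 * x - 1) * (2 * x + 3)) := by
    field_simp
    ring
  rw [key]
  exact div_neg_of_neg_of_pos (by norm_num) (by positivity)

theorem funk_hecke_coefficients_dimension_four (C : ℕ → Polynomial ℝ)
    (hC : IsGegenbauer 1 C) :
    (∀ k : ℕ, 2 ≤ k →
        2 * ((k : ℝ) + 1) / (4 * Real.pi) * Lambda4 C k =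
          2 * tauMoment C k - tauMoment C (k - 2) - tauMoment C (k + 2)) ∧
      (∀ j : ℕ, Lambda4 C (2 * j + 1) = 0) ∧
      (∀ j : ℕ, 1 ≤ j →
        Lambda4 C (2 * j) =
            (4 * Real.pi) / (2 * (2 * (j : ℝ) + 1)) *
              (4 / (2 * (j : ℝ) + 1) - 2 / (2 * (j : ℝ) - 1) - 2 / (2 * (j : ℝ) + 3)) ∧
          Lambda4 C (2 * j) < 0) ∧
      (Lambda4 C 0 = 32 * Real.pi / 3 ∧ 0 < Lambda4 C 0) := by
  obtain rfl := hC.eq_U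
  refine ⟨fun k hk => ?_, Lambda4_U_two_mul_add_one, fun j hj => ?_, ?_⟩
  · rw [Lambda4_U]
    simp only [tauMoment, Nat.cast_sub hk, Nat.cast_add, Nat.cast_ofNat]
    field_simp
    ring
  · have hj : (1 : ℝ) ≤ j := by exact_mod_cast hj
    refine ⟨Lambda4_U_two_mul j, (Lambda4_U_two_mul j).symm ▸ ?_⟩
    exact mul_neg_of_pos_of_neg (by positivity) (four_div_sub_two_div_sub_two_div_neg (by linarith))
  · have hΛ : Lambda4 (fun k : ℕ => U ℝ k) 0 = 32 * Real.pi / 3 := by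
      rw [← mul_zero 2, Lambda4_U_two_mul]
      norm_num
      ring
    exact ⟨hΛ, hΛ ▸ by positivity⟩
end
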